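/- Sufficiency of the strong basin for instantaneous target control: let A_t be an attractor of an asynchronous Boolean network with n ≥ 1 nodes and let C be a control with C(S) ⊆ basS(A_t). Then applying C instantaneously drives the network to A_t from any source state: for every s ∈ S, every fair infinite path of the original network starting from C(s) eventually reaches a state in A_t, and from that point onward remains in A_t forever. -/

import Mathlib

/-- Asynchronous transition relation of a Boolean network with update
functions `f`: `s → s'` iff `s' = Function.update s i (f i s)` for some `i`. -/
def BNStep {n : ℕ} (f : Fin n → (Fin n → Bool) → Bool)
    (s s' : Fin n → Bool) : Prop :=
  ∃ i : Fin n, s' = Function.update s i (f i s)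

/-- The set of states reachable from `s` (reflexive-transitive closure). -/
def BNReach {n : ℕ} (f : Fin n → (Fin n → Bool) → Bool)
    (s : Fin n → Bool) : Set (Fin n → Bool) :=
  {s' | Relation.ReflTransGen (BNStep f) s s'}

/-- An attractor: a nonempty set `A` with `reach s = A` for every `s ∈ A`. -/
def IsAttractor {n : ℕ} (f : Fin n → (Fin n → Bool) → Bool)
    (A : Set (Fin n → Bool)) : Prop :=
  A.Nonempty ∧ ∀ s ∈ A, BNReach f s = A

/-- Weak basin of `A`. -/
def basW {n : ℕ} (f : Fin n → (Fin n → Bool) → Bool)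
    (A : Set (Fin n → Bool)) : Set (Fin n → Bool) :=
  {s | (BNReach f s ∩ A).Nonempty}

/-- Strong basin of `A`. -/
def basS {n : ℕ} (f : Fin n → (Fin n → Bool) → Bool)
    (A : Set (Fin n → Bool)) : Set (Fin n → Bool) :=
  {s | (BNReach f s ∩ A).Nonempty ∧
    ∀ A' : Set (Fin n → Bool), IsAttractor f A' → A' ≠ A → BNReach f s ∩ A' = ∅}

/-- An infinite path of the asynchronous dynamics. -/
def IsPath {n : ℕ} (f : Fin n → (Fin n → Bool) → Bool)
    (π : ℕ → Fin n → Bool) : Prop :=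
  ∀ k : ℕ, BNStep f (π k) (π (k + 1))

/-- `x` occurs infinitely often in `π`. -/
def InfOften {n : ℕ} (π : ℕ → Fin n → Bool) (x : Fin n → Bool) : Prop :=
  ∀ i : ℕ, ∃ j ≥ i, π j = x

/-- Fairness: every successor of every infinitely-often state occurs
infinitely often. -/
def Fair {n : ℕ} (f : Fin n → (Fin n → Bool) → Bool)
    (π : ℕ → Fin n → Bool) : Prop :=
  ∀ x : Fin n → Bool, InfOften π x →
    ∀ x' : Fin n → Bool, BNStep f x x' → InfOften π x'

/-- Applying a control `C = (O, I)` to a state. -/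
def applyC {n : ℕ} (O I : Finset (Fin n)) (s : Fin n → Bool) : Fin n → Bool :=
  fun i => if i ∈ O then false else if i ∈ I then true else s i

/-- The restricted state space `S|C`. -/
def restrC {n : ℕ} (O I : Finset (Fin n)) : Set (Fin n → Bool) :=
  {s | (∀ i ∈ O, s i = false) ∧ (∀ i ∈ I, s i = true)}

/-- Update functions of the controlled network `G|C`. -/
def ctrlF {n : ℕ} (f : Fin n → (Fin n → Bool) → Bool) (O I : Finset (Fin n)) :
    Fin n → (Fin n → Bool) → Bool :=
  fun i s => if i ∈ O then false else if i ∈ I then true else f i s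

/-- `C` is a temporary target control for `At`: for every source state `s`,
every fair infinite path of the controlled network `G|C` starting from `C(s)`
eventually reaches the strong basin of `At` in the original network. -/
def IsTTC {n : ℕ} (f : Fin n → (Fin n → Bool) → Bool) (O I : Finset (Fin n))
    (At : Set (Fin n → Bool)) : Prop :=
  ∀ s : Fin n → Bool, ∀ π : ℕ → Fin n → Bool,
    π 0 = applyC O I s → IsPath (ctrlF f O I) π → Fair (ctrlF f O I) π →
    ∃ k : ℕ, π k ∈ basS f At

/-!
Along any path the state stays reachable from the initial state `C(s)`, and the strong basin is
closed under reachability (every state reaches some attractor, which can only be `At`), so the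
whole path lies in `basS At`. As the state space is finite, some state `x` occurs infinitely
often; by fairness so does every state reachable from `x`, in particular a state of `At`. Once the
path is in `At` it stays there, since an attractor contains everything reachable from it.
-/

section

variable {n : ℕ} {f : Fin n → (Fin n → Bool) → Bool}

theorem BNReach_subset_of_mem {s t : Fin n → Bool} (h : t ∈ BNReach f s) :
    BNReach f t ⊆ BNReach f s :=
  fun _ hu => Relation.ReflTransGen.trans h hu

/-- A state of `reach s` whose reachable set has minimal size generates an attractor. -/
theorem exists_isAttractor_inter_BNReach_nonempty (f : Fin n → (Fin n → Bool) → Bool)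
    (s : Fin n → Bool) : ∃ A, IsAttractor f A ∧ (BNReach f s ∩ A).Nonempty := by
  obtain ⟨t, hst, hmin⟩ := Set.exists_min_image (BNReach f s) (fun t => (BNReach f t).ncard)
    (Set.toFinite _) ⟨s, Relation.ReflTransGen.refl⟩
  refine ⟨BNReach f t, ⟨⟨t, Relation.ReflTransGen.refl⟩, fun u htu => ?_⟩,
    t, hst, Relation.ReflTransGen.refl⟩
  exact Set.eq_of_subset_of_ncard_le (BNReach_subset_of_mem htu)
    (hmin u (BNReach_subset_of_mem hst htu))

theorem IsAttractor.mem_of_mem_BNReach {A : Set (Fin n → Bool)} (hA : IsAttractor f A)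
    {a b : Fin n → Bool} (ha : a ∈ A) (hb : b ∈ BNReach f a) : b ∈ A :=
  hA.2 a ha ▸ hb

theorem mem_basS_of_mem_BNReach {At : Set (Fin n → Bool)} {s t : Fin n → Bool}
    (hs : s ∈ basS f At) (ht : t ∈ BNReach f s) : t ∈ basS f At := by
  have hsub := BNReach_subset_of_mem ht
  refine ⟨?_, fun A' hA' hne => Set.subset_eq_empty
    (Set.inter_subset_inter_left A' hsub) (hs.2 A' hA' hne)⟩
  obtain ⟨A, hA, a, hta, haA⟩ := exists_isAttractor_inter_BNReach_nonempty f t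
  obtain rfl : A = At := by
    by_contra hne
    exact (hs.2 A hA hne).subset ⟨hsub hta, haA⟩
  exact ⟨a, hta, haA⟩

theorem IsPath.mem_BNReach {π : ℕ → Fin n → Bool} (hπ : IsPath f π) {i j : ℕ} (hij : i ≤ j) :
    π j ∈ BNReach f (π i) := by
  induction j, hij using Nat.le_induction with
  | base => exact Relation.ReflTransGen.refl
  | succ j _ ih => exact ih.tail (hπ j)

theorem InfOften.of_mem_BNReach {π : ℕ → Fin n → Bool} (hfair : Fair f π)
    {x y : Fin n → Bool} (hx : InfOften π x) (hy : y ∈ BNReach f x) : InfOften π y := by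
  induction hy with
  | refl => exact hx
  | tail _ hstep ih => exact hfair _ ih _ hstep

theorem exists_infOften (π : ℕ → Fin n → Bool) : ∃ x, InfOften π x := by
  obtain ⟨x, hx⟩ := Finite.exists_infinite_fiber π
  refine ⟨x, fun i => ?_⟩
  obtain ⟨j, hj, hij⟩ := (Set.infinite_coe_iff.mp hx).exists_gt i
  exact ⟨j, hij.le, hj⟩

end

theorem instantaneous_control_sufficiency_general {n : ℕ}
    (f : Fin n → (Fin n → Bool) → Bool) (O I : Finset (Fin n))
    (At : Set (Fin n → Bool))
    (hAt : IsAttractor f At)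
    (hC : Set.range (applyC O I) ⊆ basS f At) :
    ∀ s : Fin n → Bool, ∀ π : ℕ → Fin n → Bool,
      π 0 = applyC O I s → IsPath f π → Fair f π →
      ∃ k : ℕ, π k ∈ At ∧ ∀ j ≥ k, π j ∈ At := by
  intro s π h0 hpath hfair
  obtain ⟨x, hx⟩ := exists_infOften π
  obtain ⟨k₀, -, rfl⟩ := hx 0
  have hbas : π k₀ ∈ basS f At :=
    mem_basS_of_mem_BNReach (h0 ▸ hC ⟨s, rfl⟩) (hpath.mem_BNReach k₀.zero_le)
  obtain ⟨a, hreach, haAt⟩ := hbas.1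
  obtain ⟨k, -, rfl⟩ := hx.of_mem_BNReach hfair hreach 0
  exact ⟨k, haAt, fun j hj => hAt.mem_of_mem_BNReach haAt (hpath.mem_BNReach hj)⟩

/-- sufficiency of the strong basin for instantaneous target
control: if `C(S) ⊆ basS(At)`, then every fair infinite path of the original
network starting from any `C(s)` eventually reaches `At` and stays in `At`
forever after. -/
theorem instantaneous_control_sufficiency {n : ℕ} (hn : 1 ≤ n)
    (f : Fin n → (Fin n → Bool) → Bool) (O I : Finset (Fin n))
    (hdisj : Disjoint O I) (At : Set (Fin n → Bool))
    (hAt : IsAttractor f At)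
    (hC : Set.range (applyC O I) ⊆ basS f At) :
    ∀ s : Fin n → Bool, ∀ π : ℕ → Fin n → Bool,
      π 0 = applyC O I s → IsPath f π → Fair f π →
      ∃ k : ℕ, π k ∈ At ∧ ∀ j ≥ k, π j ∈ At :=
  instantaneous_control_sufficiency_general f O I At hAt hC
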